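/- Let x be a root of unity with x ≠ 1, let n ≥ 0 be an integer, and let a ∈ ℂ∖ℤ. Then for every s ∈ ℂ with 0 < |s + n + a| < |a − m| for every integer m, the series Σ_{m=0}^{∞} ((−1)^m Li_{m+1}(x; 1−a) − x Li_{m+1}(x^{−1}; a)) (s+n+a)^m converges and Φ(s; x) = x^n Σ_{m=0}^{∞} ((−1)^m Li_{m+1}(x; 1−a) − x Li_{m+1}(x^{−1}; a)) (s+n+a)^m. -/

import Mathlib

open Filter Finset

/-- A complex number is a root of unity if some positive power of it equals 1. -/
def IsRootOfUnity (z : ℂ) : Prop := ∃ N : ℕ, 0 < N ∧ z ^ N = 1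

open scoped Classical in
/-- Partial sum `Σ_{0<n_1<⋯<n_r≤N} Π_j x_j^{n_j} (n_j + b_j − 1)^{−k_j}` where the list `K`
consists of the triples `(k_j, x_j, b_j)`. -/
noncomputable def cmhzP (K : List (ℕ × ℂ × ℂ)) (N : ℕ) : ℂ :=
  ∑ n ∈ Finset.univ.filter (fun n : Fin K.length → Fin N => StrictMono n),
    ∏ j : Fin K.length,
      (K.get j).2.1 ^ ((n j : ℕ) + 1) /
        ((((n j : ℕ) + 1 : ℕ) : ℂ) + (K.get j).2.2 - 1) ^ (K.get j).1

/-- Cyclotomic multiple Hurwitz zeta value: the limit of the partial sums `cmhzP`. -/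
noncomputable def cmhz (K : List (ℕ × ℂ × ℂ)) : ℂ := limUnder atTop (cmhzP K)

/-- Cyclotomic multiple zeta value (all Hurwitz parameters equal to 1). -/
noncomputable def cmzv (K : List (ℕ × ℂ)) : ℂ := cmhz (K.map fun p => (p.1, p.2, 1))

/-- Cyclotomic multiple t-value (all Hurwitz parameters equal to 1/2). -/
noncomputable def tval (K : List (ℕ × ℂ)) : ℂ := cmhz (K.map fun p => (p.1, p.2, (1 : ℂ)/2))

/-- Depth-one cyclotomic zeta value `Li_k(x)`. -/
noncomputable def li1 (k : ℕ) (x : ℂ) : ℂ := cmzv [(k, x)]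

/-- Depth-one cyclotomic Hurwitz zeta value `Li_k(x; b)`. -/
noncomputable def lih1 (k : ℕ) (x b : ℂ) : ℂ := cmhz [(k, x, b)]

/-- Depth-one cyclotomic t-value `t_k(x)`. -/
noncomputable def tval1 (k : ℕ) (x : ℂ) : ℂ := tval [(k, x)]

/-- The generalized digamma-type series `φ(s; x) = Σ_{k≥0} x^k/(k+s)`. -/
noncomputable def phiF (s x : ℂ) : ℂ :=
  limUnder atTop (fun N : ℕ => ∑ t ∈ Finset.range (N + 1), x ^ t / ((t : ℂ) + s))

/-- The extended trigonometric function `Φ(s; x) = φ(s; x) − φ(−s; x⁻¹) − 1/s`. -/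
noncomputable def PhiF (s x : ℂ) : ℂ := phiF s x - phiF (-s) x⁻¹ - 1 / s

/-!
Put `w = s + n + a`. Shifting the series `φ(s; x)` by `n + 1` and `φ(-s-n; x⁻¹)` by `n`, the
finitely many leftover terms cancel in pairs except for `1/s`, so
`Φ(s; x) = xⁿ (x φ(1-a+w; x) - φ(a-w; x⁻¹))`. Both terms are values of
`v ↦ y φ(b+v; y) = Σ_{j≥0} y^{j+1}/(j+b+v)`, which is expanded in powers of `v` by expanding each
`1/(j+b+v)` geometrically around `j+b`; this is possible because `|v| < |j+b|` for all `j`.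
The constant term is `Li_1(y; b)`, a series that converges by Dirichlet's test since `y ≠ 1` lies
on the unit circle; the remaining terms form an absolutely summable double series in `(j, m)`,
whose rows sum to `y^{j+1} (1/(j+b+v) - 1/(j+b))` and whose columns sum to `(-v)^m Li_{m+1}(y; b)`.
-/

open Topology

lemma summable_norm_inv_natCast_add_pow (c : ℂ) {k : ℕ} (hk : 2 ≤ k) :
    Summable fun t : ℕ => ‖((t : ℂ) + c)⁻¹‖ ^ k := by
  have hreal := (Real.summable_one_div_nat_add_rpow c.re k).mpr (by exact_mod_cast hk)
  refine hreal.of_norm_bounded_eventually_nat ?_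
  filter_upwards [eventually_gt_atTop ⌈|c.re|⌉₊] with t ht
  have hpos : 0 < (t : ℝ) + c.re := by
    have := Nat.lt_of_ceil_lt ht
    linarith [neg_abs_le c.re]
  have hre : (t : ℝ) + c.re ≤ ‖(t : ℂ) + c‖ := by
    simpa [abs_of_pos hpos] using Complex.abs_re_le_norm ((t : ℂ) + c)
  rw [norm_pow, norm_norm, norm_inv, abs_of_pos hpos, Real.rpow_natCast, one_div, ← inv_pow]
  gcongr

lemma norm_geom_sum_le {y : ℂ} (hy : ‖y‖ = 1) (hy1 : y ≠ 1) (n : ℕ) :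
    ‖∑ i ∈ range n, y ^ i‖ ≤ 2 / ‖y - 1‖ := by
  rw [geom_sum_eq hy1, norm_div]
  gcongr
  calc ‖y ^ n - 1‖ ≤ ‖y ^ n‖ + ‖(1 : ℂ)‖ := norm_sub_le _ _
    _ = 2 := by rw [norm_pow, hy]; norm_num

lemma summable_norm_inv_natCast_add_sub_inv (c d : ℂ) :
    Summable fun t : ℕ => ‖((t : ℂ) + c)⁻¹ - ((t : ℂ) + d)⁻¹‖ := by
  have hmaj := ((summable_norm_inv_natCast_add_pow c le_rfl).add
    (summable_norm_inv_natCast_add_pow d le_rfl)).mul_left ‖d - c‖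
  refine hmaj.of_norm_bounded_eventually_nat ?_
  filter_upwards [eventually_gt_atTop ⌈‖c‖⌉₊, eventually_gt_atTop ⌈‖d‖⌉₊] with t htc htd
  have hne : ∀ e : ℂ, ‖e‖ < t → (t : ℂ) + e ≠ 0 := fun e he h => by
    have := congrArg norm (eq_neg_of_add_eq_zero_left h)
    rw [norm_neg, Complex.norm_natCast] at this
    linarith
  rw [norm_norm, inv_sub_inv (hne c (Nat.lt_of_ceil_lt htc)) (hne d (Nat.lt_of_ceil_lt htd)),
    div_eq_mul_inv, mul_inv, norm_mul, norm_mul,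
    show (t : ℂ) + d - ((t : ℂ) + c) = d - c by ring]
  gcongr
  nlinarith [sq_nonneg (‖((t : ℂ) + c)⁻¹‖ - ‖((t : ℂ) + d)⁻¹‖)]

-- No condition on `c`: a term with `t + c = 0` is `0` (as `z / 0 = 0`), and there is at most one.
lemma exists_tendsto_sum_pow_div_natCast_add {y : ℂ} (hy : ‖y‖ = 1) (hy1 : y ≠ 1) (c : ℂ) :
    ∃ L, Tendsto (fun N => ∑ t ∈ range N, y ^ t / ((t : ℂ) + c)) atTop (𝓝 L) := by
  have hanti : Antitone fun t : ℕ => ((t : ℝ) + 1)⁻¹ := fun i j hij => by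
    dsimp only
    gcongr
  have hzero : Tendsto (fun t : ℕ => ((t : ℝ) + 1)⁻¹) atTop (𝓝 0) :=
    tendsto_inv_atTop_zero.comp (tendsto_natCast_atTop_atTop.atTop_add tendsto_const_nhds)
  obtain ⟨L₁, hL₁⟩ := cauchySeq_tendsto_of_complete
    (hanti.cauchySeq_series_mul_of_tendsto_zero_of_bounded hzero (norm_geom_sum_le hy hy1))
  have hcorr : Summable fun t : ℕ => y ^ t * (((t : ℂ) + c)⁻¹ - ((t : ℂ) + 1)⁻¹) :=
    .of_norm_bounded (summable_norm_inv_natCast_add_sub_inv c 1) fun t => by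
      rw [norm_mul, norm_pow, hy, one_pow, one_mul]
  refine ⟨L₁ + ∑' t : ℕ, y ^ t * (((t : ℂ) + c)⁻¹ - ((t : ℂ) + 1)⁻¹),
    (hL₁.add hcorr.hasSum.tendsto_sum_nat).congr fun N => ?_⟩
  rw [← sum_add_distrib]
  refine sum_congr rfl fun t _ => ?_
  rw [Complex.real_smul]
  push_cast
  ring

lemma pow_mul_sum_inv_pow_div_eq_neg {y : ℂ} (hy0 : y ≠ 0) (s : ℂ) (n : ℕ) :
    y ^ n * ∑ t ∈ range n, y⁻¹ ^ t / ((t : ℂ) + (-s - n)) =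
      -∑ t ∈ range n, y ^ (t + 1) / (((t + 1 : ℕ) : ℂ) + s) := by
  rw [mul_sum, ← sum_range_reflect, ← sum_neg_distrib]
  refine sum_congr rfl fun t ht => ?_
  have htn : t + 1 ≤ n := mem_range.mp ht
  have hpow : y ^ n * y⁻¹ ^ (n - 1 - t) = y ^ (t + 1) := by
    obtain ⟨k, rfl⟩ := Nat.exists_eq_add_of_le' htn
    rw [show k + (t + 1) - 1 - t = k by omega, pow_add, inv_pow, mul_right_comm,
      mul_inv_cancel₀ (pow_ne_zero _ hy0), one_mul]
  have hcast : ((n - 1 - t : ℕ) : ℂ) + (-s - n) = -(((t + 1 : ℕ) : ℂ) + s) := by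
    rw [show n - 1 - t = n - (t + 1) by omega, Nat.cast_sub htn]
    ring
  rw [← mul_div_assoc, hpow, hcast, div_neg]

lemma tendsto_sum_range_phiF {y : ℂ} (hy : ‖y‖ = 1) (hy1 : y ≠ 1) (c : ℂ) :
    Tendsto (fun N => ∑ t ∈ range N, y ^ t / ((t : ℂ) + c)) atTop (𝓝 (phiF c y)) := by
  obtain ⟨L, hL⟩ := exists_tendsto_sum_pow_div_natCast_add hy hy1 c
  have hL' : Tendsto (fun N => ∑ t ∈ range (N + 1), y ^ t / ((t : ℂ) + c)) atTop (𝓝 L) :=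
    hL.comp (tendsto_add_atTop_nat 1)
  rwa [phiF, hL'.limUnder_eq]

lemma phiF_eq_sum_add_pow_mul_phiF {y : ℂ} (hy : ‖y‖ = 1) (hy1 : y ≠ 1) (c : ℂ) (k : ℕ) :
    phiF c y = ∑ t ∈ range k, y ^ t / ((t : ℂ) + c) + y ^ k * phiF (c + k) y := by
  refine tendsto_nhds_unique ((tendsto_sum_range_phiF hy hy1 c).comp (tendsto_add_atTop_nat k))
    (((tendsto_sum_range_phiF hy hy1 (c + k)).const_mul (y ^ k)).const_add _
      |>.congr fun N => ?_)
  simp only [Function.comp_apply, add_comm N k, sum_range_add, mul_sum, ← mul_div_assoc,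
    ← pow_add]
  congr 1
  refine sum_congr rfl fun t _ => ?_
  push_cast
  ring

lemma PhiF_eq_pow_mul_sub {y : ℂ} (hy : ‖y‖ = 1) (hy1 : y ≠ 1) (s : ℂ) (n : ℕ) :
    PhiF s y = y ^ n * (y * phiF (s + (n + 1)) y - phiF (-s - n) y⁻¹) := by
  have hy0 : y ≠ 0 := by rintro rfl; simp at hy
  have hyi : ‖y⁻¹‖ = 1 := by rw [norm_inv, hy, inv_one]
  rw [PhiF, phiF_eq_sum_add_pow_mul_phiF hy hy1 s (n + 1),
    phiF_eq_sum_add_pow_mul_phiF hyi (inv_ne_one.mpr hy1) (-s - n) n, sub_add_cancel,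
    mul_sub, mul_add, pow_mul_sum_inv_pow_div_eq_neg hy0, sum_range_succ', inv_pow,
    mul_inv_cancel_left₀ (pow_ne_zero _ hy0)]
  push_cast
  ring

lemma cmhzP_singleton (k : ℕ) (y b : ℂ) (N : ℕ) :
    cmhzP [(k, y, b)] N = ∑ j ∈ range N, y ^ (j + 1) / ((j : ℂ) + b) ^ k := by
  have hmono : ∀ f : Fin [(k, y, b)].length → Fin N, StrictMono f :=
    fun f => Subsingleton.strictMono (α := Fin 1) f
  rw [cmhzP, filter_true_of_mem fun f _ => hmono f]
  refine (Fintype.sum_equiv (Equiv.funUnique (Fin 1) (Fin N)) _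
    (fun j : Fin N => y ^ ((j : ℕ) + 1) / ((j : ℂ) + b) ^ k) fun f => ?_).trans
    (Fin.sum_univ_eq_sum_range (fun j => y ^ (j + 1) / ((j : ℂ) + b) ^ k) N)
  simp [add_sub_right_comm]

lemma lih1_eq_of_tendsto {k : ℕ} {y b L : ℂ}
    (h : Tendsto (fun N => ∑ j ∈ range N, y ^ (j + 1) / ((j : ℂ) + b) ^ k) atTop (𝓝 L)) :
    lih1 k y b = L := by
  rw [lih1, cmhz, funext (cmhzP_singleton k y b), h.limUnder_eq]

lemma lih1_one {y : ℂ} (hy : ‖y‖ = 1) (hy1 : y ≠ 1) (b : ℂ) : lih1 1 y b = y * phiF b y :=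
  lih1_eq_of_tendsto <| ((tendsto_sum_range_phiF hy hy1 b).const_mul y).congr fun N => by
    rw [mul_sum]
    exact sum_congr rfl fun j _ => by ring

lemma hasSum_lih1 {y : ℂ} (hy : ‖y‖ ≤ 1) (b : ℂ) {k : ℕ} (hk : 2 ≤ k) :
    HasSum (fun j : ℕ => y ^ (j + 1) / ((j : ℂ) + b) ^ k) (lih1 k y b) := by
  have hs : Summable fun j : ℕ => y ^ (j + 1) / ((j : ℂ) + b) ^ k :=
    .of_norm_bounded (summable_norm_inv_natCast_add_pow b hk) fun j => by
      rw [div_eq_mul_inv, norm_mul, ← inv_pow, norm_pow, norm_pow]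
      exact mul_le_of_le_one_left (by positivity) (pow_le_one₀ (norm_nonneg y) hy)
  rw [lih1_eq_of_tendsto hs.hasSum.tendsto_sum_nat]
  exact hs.hasSum

lemma hasSum_neg_pow_succ_div_pow {d v : ℂ} (hv : ‖v‖ < ‖d‖) :
    HasSum (fun m : ℕ => (-v) ^ (m + 1) / d ^ (m + 2)) ((d + v)⁻¹ - d⁻¹) := by
  have hd : d ≠ 0 := norm_pos_iff.mp ((norm_nonneg v).trans_lt hv)
  have hdv : d + v ≠ 0 := fun h => by
    rw [add_eq_zero_iff_eq_neg.mp h, norm_neg] at hv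
    exact hv.false
  have hr : ‖-v / d‖ < 1 := by rwa [norm_div, norm_neg, div_lt_one (norm_pos_iff.mpr hd)]
  have hsum : (d + v)⁻¹ - d⁻¹ = -v / d ^ 2 * (1 - -v / d)⁻¹ := by
    rw [show (1 : ℂ) - -v / d = (d + v) / d by field_simp; ring, inv_div]
    field_simp
    ring
  rw [hsum]
  refine ((hasSum_geometric_of_norm_lt_one hr).mul_left (-v / d ^ 2)).congr_fun fun m => ?_
  rw [div_pow]
  field_simp
  ring

lemma summable_neg_pow_succ_mul_pow_div_pow {y v b : ℂ} (hy : ‖y‖ ≤ 1)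
    (hv : ∀ j : ℕ, ‖v‖ < ‖(j : ℂ) + b‖) :
    Summable fun p : ℕ × ℕ =>
      (-v) ^ (p.2 + 1) * (y ^ (p.1 + 1) / ((p.1 : ℂ) + b) ^ (p.2 + 2)) := by
  set q : ℕ → ℝ := fun j => ‖((j : ℂ) + b)⁻¹‖
  have hq : ∀ j, ‖v‖ * q j < 1 := fun j => by
    have hd : 0 < ‖(j : ℂ) + b‖ := (norm_nonneg v).trans_lt (hv j)
    rw [show q j = ‖(j : ℂ) + b‖⁻¹ from norm_inv _, ← div_eq_mul_inv, div_lt_one hd]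
    exact hv j
  have hq2 : Summable fun j => q j ^ 2 := summable_norm_inv_natCast_add_pow b le_rfl
  have hsmall : ∀ᶠ j in atTop, ‖v‖ * q j ≤ 1 / 2 := by
    have := (hq2.tendsto_atTop_zero.const_mul (‖v‖ ^ 2)).eventually (gt_mem_nhds (a := 1 / 4)
      (by norm_num))
    filter_upwards [this] with j hj
    nlinarith [norm_nonneg v, norm_nonneg ((j : ℂ) + b)⁻¹]
  refine .of_norm_bounded (g := fun p : ℕ × ℕ => ‖v‖ * q p.1 ^ 2 * (‖v‖ * q p.1) ^ p.2) ?_ ?_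
  · refine (summable_prod_of_nonneg fun p => by positivity).mpr ⟨fun j => ?_, ?_⟩
    · exact (summable_geometric_of_lt_one (by positivity) (hq j)).mul_left (‖v‖ * q j ^ 2)
    simp_rw [tsum_mul_left, tsum_geometric_of_lt_one (by positivity) (hq _)]
    refine (hq2.mul_left (2 * ‖v‖)).of_norm_bounded_eventually_nat ?_
    filter_upwards [hsmall] with j hj
    rw [Real.norm_of_nonneg (by have := hq j; positivity)]
    have : (1 - ‖v‖ * q j)⁻¹ ≤ 2 := by
      rw [inv_le_comm₀ (by linarith) (by norm_num)]
      linarith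
    calc ‖v‖ * q j ^ 2 * (1 - ‖v‖ * q j)⁻¹ ≤ ‖v‖ * q j ^ 2 * 2 := by gcongr
      _ = 2 * ‖v‖ * q j ^ 2 := by ring
  · rintro ⟨j, m⟩
    rw [norm_mul, norm_div, norm_pow, norm_pow, norm_pow, norm_neg, div_eq_mul_inv, ← inv_pow]
    calc ‖v‖ ^ (m + 1) * (‖y‖ ^ (j + 1) * ‖(j : ℂ) + b‖⁻¹ ^ (m + 2))
        ≤ ‖v‖ ^ (m + 1) * (1 * q j ^ (m + 2)) := by
          gcongr
          · exact pow_le_one₀ (norm_nonneg y) hy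
          · exact (norm_inv _).ge
      _ = ‖v‖ * q j ^ 2 * (‖v‖ * q j) ^ m := by ring

theorem hasSum_lih1_mul_neg_pow {y v b : ℂ} (hy : ‖y‖ = 1) (hy1 : y ≠ 1)
    (hv : ∀ j : ℕ, ‖v‖ < ‖(j : ℂ) + b‖) :
    HasSum (fun m : ℕ => lih1 (m + 1) y b * (-v) ^ m) (y * phiF (b + v) y) := by
  set g : ℕ × ℕ → ℂ :=
    fun p => (-v) ^ (p.2 + 1) * (y ^ (p.1 + 1) / ((p.1 : ℂ) + b) ^ (p.2 + 2))
  have hg : HasSum g (∑' p, g p) := (summable_neg_pow_succ_mul_pow_div_pow hy.le hv).hasSum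
  have hcols : HasSum (fun m : ℕ => (-v) ^ (m + 1) * lih1 (m + 2) y b) (∑' p, g p) := by
    refine ((Equiv.prodComm ℕ ℕ).hasSum_iff.mpr hg).prod_fiberwise fun m => ?_
    exact (hasSum_lih1 hy.le b (k := m + 2) (by omega)).mul_left ((-v) ^ (m + 1))
  have hrows : HasSum (fun j : ℕ => y ^ (j + 1) * (((j : ℂ) + b + v)⁻¹ - ((j : ℂ) + b)⁻¹))
      (∑' p, g p) := by
    refine hg.prod_fiberwise fun j => ?_
    refine ((hasSum_neg_pow_succ_div_pow (hv j)).mul_left (y ^ (j + 1))).congr_fun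
      fun m => ?_
    simp only [g]
    ring
  have hlim : y * phiF (b + v) y = y * phiF b y + ∑' p, g p := by
    refine tendsto_nhds_unique ((tendsto_sum_range_phiF hy hy1 (b + v)).const_mul y) <|
      (((tendsto_sum_range_phiF hy hy1 b).const_mul y).add hrows.tendsto_sum_nat).congr
        fun N => ?_
    rw [mul_sum, mul_sum, ← sum_add_distrib]
    exact sum_congr rfl fun j _ => by ring
  rw [hlim, ← hasSum_nat_add_iff' 1]
  simpa [lih1_one hy hy1, mul_comm ((-v) ^ _)] using hcols

theorem PhiF_expansion_at_nonint_general (x : ℂ) (hx : IsRootOfUnity x) (hx1 : x ≠ 1)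
    (n : ℕ) (a : ℂ) (s : ℂ)
    (h2 : ∀ m : ℤ, ‖s + (n : ℂ) + a‖ < ‖a - (m : ℂ)‖) :
    Summable (fun m : ℕ =>
      ((-1 : ℂ) ^ m * lih1 (m + 1) x (1 - a) - x * lih1 (m + 1) x⁻¹ a)
        * (s + (n : ℂ) + a) ^ m) ∧
    PhiF s x = x ^ n * ∑' m : ℕ,
      ((-1 : ℂ) ^ m * lih1 (m + 1) x (1 - a) - x * lih1 (m + 1) x⁻¹ a)
        * (s + (n : ℂ) + a) ^ m := by
  obtain ⟨N, hN, hxN⟩ := hx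
  have hx_norm : ‖x‖ = 1 := Complex.norm_eq_one_of_pow_eq_one hxN hN.ne'
  have hx0 : x ≠ 0 := by rintro rfl; simp at hx_norm
  set w := s + (n : ℂ) + a with hw
  have hA := hasSum_lih1_mul_neg_pow (b := 1 - a) (v := w) hx_norm hx1 fun j => by
    rw [← norm_neg ((j : ℂ) + (1 - a)),
      show -((j : ℂ) + (1 - a)) = a - ((j + 1 : ℤ) : ℂ) by push_cast; ring]
    exact h2 (j + 1)
  have hB := hasSum_lih1_mul_neg_pow (b := a) (v := -w) (by rw [norm_inv, hx_norm, inv_one])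
    (inv_ne_one.mpr hx1) fun j => by simpa [add_comm] using h2 (-j)
  have hF := (hA.sub (hB.mul_left x)).congr_fun fun m => by
    show ((-1 : ℂ) ^ m * lih1 (m + 1) x (1 - a) - x * lih1 (m + 1) x⁻¹ a) * w ^ m = _
    rw [neg_neg, neg_pow w]
    ring
  refine ⟨hF.summable, ?_⟩
  rw [hF.tsum_eq, PhiF_eq_pow_mul_sub hx_norm hx1 s n, mul_inv_cancel_left₀ hx0,
    show 1 - a + w = s + (n + 1) by rw [hw]; ring, show a + -w = -s - n by rw [hw]; ring]

/-- Expansion of `Φ(s; x)` around the non-integer point `−n−a` (Lemma `lem-xu-yu-one`). -/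
theorem PhiF_expansion_at_nonint (x : ℂ) (hx : IsRootOfUnity x) (hx1 : x ≠ 1)
    (n : ℕ) (a : ℂ) (ha : ∀ z : ℤ, a ≠ (z : ℂ)) (s : ℂ)
    (h1 : 0 < ‖s + (n : ℂ) + a‖)
    (h2 : ∀ m : ℤ, ‖s + (n : ℂ) + a‖ < ‖a - (m : ℂ)‖) :
    Summable (fun m : ℕ =>
      ((-1 : ℂ) ^ m * lih1 (m + 1) x (1 - a) - x * lih1 (m + 1) x⁻¹ a)
        * (s + (n : ℂ) + a) ^ m) ∧
    PhiF s x = x ^ n * ∑' m : ℕ,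
      ((-1 : ℂ) ^ m * lih1 (m + 1) x (1 - a) - x * lih1 (m + 1) x⁻¹ a)
        * (s + (n : ℂ) + a) ^ m :=
  PhiF_expansion_at_nonint_general x hx hx1 n a s h2
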